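/- arXiv:2412.12958 — 2 statements merged into one kernel-verified Lean document; each statement's English description precedes it below -/
import Mathlib

section
/- Let P_q be a Paley graph. Define x* ∈ R^q by x*_i = 1/√q for all vertices i, and X* ∈ R^{q×q} by X*_{ii} = 1/√q, X*_{ij} = 0 if {i,j} is an edge of P_q, and X*_{ij} = 2/(q+√q) if i ≠ j and {i,j} is not an edge. Then (x*, X*) is an optimal solution of the SDP max{1ᵀx : [[X,x],[xᵀ,1]] ⪰ 0, diag(X) = x, X_{ij} = 0 ∀{i,j} ∈ E(P_q)}, with optimal value √q. -/
open scoped Classical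

/-- The Paley graph on a finite field: vertices are field elements, two vertices
adjacent iff their difference is a nonzero square. -/
def Paley (F : Type) [Field F] : SimpleGraph F :=
  SimpleGraph.fromRel (fun x y => ∃ z : F, z ≠ 0 ∧ x - y = z ^ 2)

/-- Feasibility for the SDP formulation ϑ₁:
max 1ᵀx s.t. [[X, x],[xᵀ,1]] ⪰ 0, diag(X) = x, X_{ij} = 0 on edges. -/
def Theta1Feasible {V : Type} [Fintype V] (G : SimpleGraph V)
    (x : V → ℝ) (X : Matrix V V ℝ) : Prop :=
  (Matrix.fromBlocks X (Matrix.of fun i (_ : Unit) => x i)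
      (Matrix.of fun (_ : Unit) j => x j) 1).PosSemidef ∧
  (∀ i, X i i = x i) ∧ (∀ i j, G.Adj i j → X i j = 0)

/-- The vector x* with all entries 1/√q. -/
noncomputable def xstar (F : Type) (q : ℕ) : F → ℝ := fun _ => 1 / Real.sqrt q

/-- The matrix X* with diagonal 1/√q, zero on edges of the Paley graph and
2/(q+√q) on non-edges. -/
noncomputable def Xstar (F : Type) [Field F] (q : ℕ) : Matrix F F ℝ :=
  Matrix.of fun i j =>
    if i = j then 1 / Real.sqrt q
    else if (Paley F).Adj i j then 0 else 2 / (q + Real.sqrt q)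

/-!
Weak duality: pairing the feasible block matrix `[[X, x], [xᵀ, 1]]` entrywise with a positive
semidefinite `[[Z, -1], [-1ᵀ, t]]`, where `Z` has unit diagonal and vanishes on non-edges, gives
`∑ xᵢ ≤ t`. For the Paley graph, the Jacobsthal matrix `Cᵢⱼ = χ(i - j)` of the quadratic
character satisfies `CJ = JC = 0` and, through the Jacobi sum `J(χ, χ) = -χ(-1) = -1`,
`C² = qI - J`. Hence `P(ε) = I - (ε/√q) C - J/q` is twice an orthogonal projection for
`ε = ±1`.
By Schur complements, `X* - x* x*ᵀ = P(1)/(1 + √q)` makes `(x*, X*)` feasible, and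
`Z = (√q/(1 + √q)) P(-1) + J/√q` certifies `∑ xᵢ ≤ √q`.
-/

open Matrix

section PosSemidef

variable {n : Type*} [Fintype n]

theorem Matrix.PosSemidef.sum_mul_nonneg {A B : Matrix n n ℝ} (hA : A.PosSemidef)
    (hB : B.PosSemidef) : 0 ≤ ∑ i, ∑ j, A i j * B i j := by
  simpa [dotProduct, mulVec] using (hA.hadamard hB).dotProduct_mulVec_nonneg 1

theorem Matrix.posSemidef_of_mul_self_eq_smul {P : Matrix n n ℝ} (hP : P.IsHermitian) {c : ℝ}
    (hc : 0 < c) (h : P * P = c • P) : P.PosSemidef := by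
  have hP' : P = c⁻¹ • (Pᴴ * P) := by
    rw [hP.eq, h, smul_smul, inv_mul_cancel₀ hc.ne', one_smul]
  rw [hP']
  exact (posSemidef_conjTranspose_mul_self P).smul (inv_nonneg.2 hc.le)

theorem Matrix.posSemidef_fromBlocks_iff_sub_vecMulVec (A : Matrix n n ℝ) (x : n → ℝ) {t : ℝ}
    (ht : 0 < t) :
    (fromBlocks A (of fun i (_ : Unit) => x i) (of fun (_ : Unit) j => x j)
        (t • 1)).PosSemidef ↔ (A - t⁻¹ • vecMulVec x x).PosSemidef := by
  have hD : (t • 1 : Matrix Unit Unit ℝ).PosDef := PosDef.one.smul ht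
  let : Invertible (t • 1 : Matrix Unit Unit ℝ) :=
    ⟨t⁻¹ • 1, by simp [smul_smul, ht.ne'], by simp [smul_smul, ht.ne']⟩
  have hinv : (t • 1 : Matrix Unit Unit ℝ)⁻¹ = t⁻¹ • 1 :=
    inv_eq_left_inv (by simp [smul_smul, ht.ne'])
  have hrow : (of fun (_ : Unit) j => x j) = (of fun i (_ : Unit) => x i)ᴴ := by ext; simp
  have hschur : (of fun i (_ : Unit) => x i) * (t • 1 : Matrix Unit Unit ℝ)⁻¹ *
      (of fun i (_ : Unit) => x i)ᴴ = t⁻¹ • vecMulVec x x := by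
    rw [hinv]; ext; simp [vecMulVec, mul_apply]; ring
  rw [hrow, PosDef.fromBlocks₂₂ A _ hD, hschur]

end PosSemidef

theorem Theta1Feasible.sum_le {V : Type} [Fintype V] {G : SimpleGraph V} {x : V → ℝ}
    {X : Matrix V V ℝ} (h : Theta1Feasible G x X) {Z : Matrix V V ℝ} {t : ℝ} (ht : 0 < t)
    (hZ : (Z - t⁻¹ • vecMulVec 1 1).PosSemidef) (hZ_diag : ∀ i, Z i i = 1)
    (hZ_nonadj : ∀ i j, i ≠ j → ¬G.Adj i j → Z i j = 0) :
    ∑ i, x i ≤ t := by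
  obtain ⟨hM, hX_diag, hX_adj⟩ := h
  have hN : (fromBlocks Z (of fun i (_ : Unit) => (-1 : V → ℝ) i)
      (of fun (_ : Unit) j => (-1 : V → ℝ) j) (t • 1)).PosSemidef := by
    rwa [posSemidef_fromBlocks_iff_sub_vecMulVec _ _ ht, vecMulVec_neg, neg_vecMulVec, neg_neg]
  have hXZ : ∀ i, ∑ j, X i j * Z i j = x i := fun i => by
    rw [Finset.sum_eq_single i (fun j _ hji => ?_) (by simp), hX_diag, hZ_diag, mul_one]
    by_cases hij : G.Adj i j
    · rw [hX_adj i j hij, zero_mul]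
    · rw [hZ_nonadj i j (Ne.symm hji) hij, mul_zero]
  simpa [Fintype.sum_sum_type, hXZ] using hM.sum_mul_nonneg hN

section Jacobsthal

variable {F R : Type*} [Field F] [Fintype F] [CommRing R]

theorem MulChar.sum_mul_apply_sub_eq_mul_jacobiSum (χ ψ : MulChar F R) {d : F} (hd : d ≠ 0) :
    ∑ k, χ k * ψ (d - k) = (χ * ψ) d * jacobiSum χ ψ := by
  rw [jacobiSum, Finset.mul_sum, ← Equiv.sum_comp (Equiv.mulLeft₀ d hd)]
  refine Finset.sum_congr rfl fun y _ => ?_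
  rw [Equiv.mulLeft₀_apply, show d - d * y = d * (1 - y) by ring, map_mul, map_mul,
    MulChar.coeToFun_mul, Pi.mul_apply]
  ring

omit [Fintype F] in
theorem MulChar.IsQuadratic.mul_self_apply {χ : MulChar F R} (hχ : χ.IsQuadratic) {a : F}
    (ha : a ≠ 0) : χ a * χ a = 1 := by
  rw [← Pi.mul_apply, ← MulChar.coeToFun_mul, ← sq, hχ.sq_eq_one, MulChar.one_apply ha.isUnit]

def jacobsthalMatrix (χ : MulChar F R) : Matrix F F R := of fun i j => χ (i - j)

variable [IsDomain R] {χ : MulChar F R}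

theorem jacobsthalMatrix_mul_vecMulVec_one (hχ : χ ≠ 1) :
    jacobsthalMatrix χ * vecMulVec 1 1 = 0 := by
  ext i j
  simp only [jacobsthalMatrix, mul_apply, of_apply, vecMulVec_apply, Pi.one_apply, mul_one,
    Matrix.zero_apply]
  exact (Fintype.sum_equiv (Equiv.subLeft i) _ χ fun _ => rfl).trans
    (MulChar.sum_eq_zero_of_ne_one hχ)

theorem vecMulVec_one_mul_jacobsthalMatrix (hχ : χ ≠ 1) :
    vecMulVec 1 1 * jacobsthalMatrix χ = 0 := by
  ext i j
  simp only [jacobsthalMatrix, mul_apply, of_apply, vecMulVec_apply, Pi.one_apply, one_mul,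
    Matrix.zero_apply]
  exact (Fintype.sum_equiv (Equiv.subRight j) _ χ fun _ => rfl).trans
    (MulChar.sum_eq_zero_of_ne_one hχ)

theorem MulChar.IsQuadratic.jacobiSum_self (hχ : χ.IsQuadratic) (hχ₁ : χ ≠ 1) :
    jacobiSum χ χ = -χ (-1) := by
  simpa [hχ.inv] using jacobiSum_nontrivial_inv hχ₁

theorem jacobsthalMatrix_mul_self (hχ : χ.IsQuadratic) (hχ₁ : χ ≠ 1) :
    jacobsthalMatrix χ * jacobsthalMatrix χ =
      χ (-1) • ((Fintype.card F : R) • 1 - vecMulVec 1 1) := by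
  ext i j
  simp only [jacobsthalMatrix, mul_apply, of_apply, Matrix.smul_apply, Matrix.sub_apply,
    one_apply, vecMulVec_apply, Pi.one_apply, smul_eq_mul, mul_one, mul_ite, mul_zero]
  rw [← Equiv.sum_comp (Equiv.addRight j)]
  simp only [Equiv.coe_addRight, add_sub_cancel_right, show ∀ k, i - (k + j) = (i - j) - k by
    intro k; ring]
  by_cases hij : i = j
  · have hsq : ∀ k : F, χ (i - j - k) * χ k = χ (-1) * (if k ≠ 0 then 1 else 0) := fun k => by
      split_ifs with hk
      · rw [hij, sub_self, zero_sub, neg_eq_neg_one_mul, map_mul, mul_assoc,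
          hχ.mul_self_apply hk]
      · simp [of_not_not hk, MulChar.map_zero]
    simp only [hsq, ← Finset.mul_sum, Finset.sum_boole, if_pos hij, Finset.filter_ne',
      Finset.mem_univ, Finset.card_erase_of_mem, Finset.card_univ]
    rw [Nat.cast_sub Fintype.card_pos, Nat.cast_one]
  · have hd : i - j ≠ 0 := sub_ne_zero.2 hij
    simp only [mul_comm (χ (i - j - _)), MulChar.sum_mul_apply_sub_eq_mul_jacobiSum χ χ hd,
      ← sq, hχ.sq_eq_one, MulChar.one_apply hd.isUnit, one_mul, if_neg hij]
    rw [hχ.jacobiSum_self hχ₁]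
    ring

end Jacobsthal

section Paley

variable {F : Type} [Field F] [Fintype F]

theorem ringChar_ne_two_of_card_mod_four (hF : Fintype.card F % 4 = 1) : ringChar F ≠ 2 :=
  fun h => by have := FiniteField.even_card_of_char_two h; omega

theorem isSquare_neg_one_of_card_mod_four (hF : Fintype.card F % 4 = 1) : IsSquare (-1 : F) :=
  FiniteField.isSquare_neg_one_iff.2 (by omega)

omit [Fintype F] in
theorem paley_adj_iff (h : IsSquare (-1 : F)) {i j : F} :
    (Paley F).Adj i j ↔ i ≠ j ∧ IsSquare (i - j) := by
  have hsq : ∀ a : F, a ≠ 0 → ((∃ z, z ≠ 0 ∧ a = z ^ 2) ↔ IsSquare a) := fun a ha =>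
    ⟨fun ⟨z, _, hz⟩ => ⟨z, hz.trans (sq z)⟩,
      fun ⟨r, hr⟩ => ⟨r, fun h0 => ha (by simp [hr, h0]), hr.trans (sq r).symm⟩⟩
  have hswap : IsSquare (j - i) ↔ IsSquare (i - j) := by
    constructor <;> intro h' <;> simpa [mul_neg, neg_sub] using h.mul h'
  rw [Paley, SimpleGraph.fromRel_adj]
  refine and_congr_right fun hij => ?_
  rw [hsq _ (sub_ne_zero.2 hij), hsq _ (sub_ne_zero.2 (Ne.symm hij)), hswap, or_self]

variable (F) in
noncomputable def quadraticCharReal : MulChar F ℝ :=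
  (quadraticChar F).ringHomComp (Int.castRingHom ℝ)

theorem quadraticCharReal_apply_sub (hF : Fintype.card F % 4 = 1) {i j : F} (hij : i ≠ j) :
    quadraticCharReal F (i - j) = if (Paley F).Adj i j then 1 else -1 := by
  have hd : i - j ≠ 0 := sub_ne_zero.2 hij
  rw [paley_adj_iff (isSquare_neg_one_of_card_mod_four hF), quadraticCharReal,
    MulChar.ringHomComp_apply]
  split_ifs with h
  · simp [(quadraticChar_one_iff_isSquare hd).2 h.2]
  · simp [quadraticChar_neg_one_iff_not_isSquare.2 (fun h' => h ⟨hij, h'⟩)]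

theorem quadraticCharReal_isQuadratic : (quadraticCharReal F).IsQuadratic :=
  (quadraticChar_isQuadratic F).comp _

theorem quadraticCharReal_ne_one (hF : ringChar F ≠ 2) : quadraticCharReal F ≠ 1 :=
  (MulChar.ringHomComp_ne_one_iff (RingHom.injective_int _)).2 (quadraticChar_ne_one hF)

theorem quadraticCharReal_neg_one (hF : Fintype.card F % 4 = 1) :
    quadraticCharReal F (-1) = 1 := by
  simp [quadraticCharReal, (quadraticChar_one_iff_isSquare (neg_ne_zero.2 one_ne_zero)).2
    (isSquare_neg_one_of_card_mod_four hF)]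

variable (F) in
/-- Twice the orthogonal projection onto the `-ε√q`-eigenspace of the Jacobsthal matrix. -/
noncomputable def paleyProj (ε : ℝ) : Matrix F F ℝ :=
  1 - (ε / √(Fintype.card F)) • jacobsthalMatrix (quadraticCharReal F) -
    (Fintype.card F : ℝ)⁻¹ • vecMulVec 1 1

theorem paleyProj_apply (hF : Fintype.card F % 4 = 1) (ε : ℝ) (i j : F) :
    paleyProj F ε i j =
      if i = j then 1 - (Fintype.card F : ℝ)⁻¹
      else if (Paley F).Adj i j then -(ε / √(Fintype.card F)) - (Fintype.card F : ℝ)⁻¹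
      else ε / √(Fintype.card F) - (Fintype.card F : ℝ)⁻¹ := by
  simp only [paleyProj, jacobsthalMatrix, Matrix.sub_apply, Matrix.smul_apply, one_apply,
    of_apply, vecMulVec_apply, Pi.one_apply, mul_one, smul_eq_mul]
  split_ifs with hij hadj <;> simp_all [quadraticCharReal_apply_sub hF, MulChar.map_zero]

theorem paleyProj_isHermitian (hF : Fintype.card F % 4 = 1) (ε : ℝ) :
    (paleyProj F ε).IsHermitian :=
  IsHermitian.ext fun i j => by simp [paleyProj_apply hF, eq_comm, (Paley F).adj_comm]

theorem paleyProj_mul_self (hF : Fintype.card F % 4 = 1) {ε : ℝ} (hε : ε ^ 2 = 1) :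
    paleyProj F ε * paleyProj F ε = (2 : ℝ) • paleyProj F ε := by
  have h2 := ringChar_ne_two_of_card_mod_four hF
  have hC := jacobsthalMatrix_mul_self quadraticCharReal_isQuadratic (quadraticCharReal_ne_one h2)
  have hCJ := jacobsthalMatrix_mul_vecMulVec_one (quadraticCharReal_ne_one h2)
  have hJC := vecMulVec_one_mul_jacobsthalMatrix (quadraticCharReal_ne_one h2)
  have hJ : (vecMulVec 1 1 : Matrix F F ℝ) * vecMulVec 1 1 =
      (Fintype.card F : ℝ) • vecMulVec 1 1 := by
    rw [vecMulVec_mul_vecMulVec, vecMulVec_smul]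
    simp [dotProduct]
  have hq : (0 : ℝ) < Fintype.card F := by exact_mod_cast Fintype.card_pos
  have hs := Real.sq_sqrt hq.le
  rw [quadraticCharReal_neg_one hF, one_smul] at hC
  simp only [paleyProj, sub_mul, mul_sub, Matrix.smul_mul, Matrix.mul_smul, Matrix.one_mul,
    Matrix.mul_one, hC, hCJ, hJC, hJ, smul_zero, smul_sub, smul_smul]
  match_scalars <;> field_simp <;> grind

theorem paleyProj_posSemidef (hF : Fintype.card F % 4 = 1) {ε : ℝ} (hε : ε ^ 2 = 1) :
    (paleyProj F ε).PosSemidef :=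
  posSemidef_of_mul_self_eq_smul (paleyProj_isHermitian hF ε) two_pos (paleyProj_mul_self hF hε)

theorem Xstar_sub_vecMulVec_xstar (hF : Fintype.card F % 4 = 1) :
    Xstar F (Fintype.card F) - vecMulVec (xstar F (Fintype.card F)) (xstar F (Fintype.card F)) =
      (1 + √(Fintype.card F))⁻¹ • paleyProj F 1 := by
  have hq : (0 : ℝ) < Fintype.card F := by exact_mod_cast Fintype.card_pos
  have hs := Real.sq_sqrt hq.le
  have hs0 := Real.sqrt_pos.2 hq
  ext i j
  simp only [Xstar, xstar, Matrix.sub_apply, Matrix.smul_apply, of_apply, vecMulVec_apply,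
    paleyProj_apply hF, smul_eq_mul]
  split_ifs <;> field_simp <;> grind

theorem theta1Feasible_xstar_Xstar (hF : Fintype.card F % 4 = 1) :
    Theta1Feasible (Paley F) (xstar F (Fintype.card F)) (Xstar F (Fintype.card F)) := by
  refine ⟨?_, fun i => by simp [Xstar, xstar], fun i j hij => by simp [Xstar, hij.ne, hij]⟩
  rw [← one_smul ℝ (1 : Matrix Unit Unit ℝ), posSemidef_fromBlocks_iff_sub_vecMulVec _ _ one_pos,
    inv_one, one_smul, Xstar_sub_vecMulVec_xstar hF]
  exact (paleyProj_posSemidef hF (one_pow 2)).smul (by positivity)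

theorem exists_theta1_dual_certificate (hF : Fintype.card F % 4 = 1) :
    ∃ Z : Matrix F F ℝ, (Z - (√(Fintype.card F))⁻¹ • vecMulVec 1 1).PosSemidef ∧
      (∀ i, Z i i = 1) ∧ ∀ i j, i ≠ j → ¬(Paley F).Adj i j → Z i j = 0 := by
  have hq : (0 : ℝ) < Fintype.card F := by exact_mod_cast Fintype.card_pos
  have hs := Real.sq_sqrt hq.le
  have hs0 := Real.sqrt_pos.2 hq
  refine ⟨(√(Fintype.card F) / (1 + √(Fintype.card F))) • paleyProj F (-1) +
    (√(Fintype.card F))⁻¹ • vecMulVec 1 1, ?_, fun i => ?_, fun i j hij hadj => ?_⟩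
  · rw [add_sub_cancel_right]
    exact (paleyProj_posSemidef hF (by norm_num)).smul (by positivity)
  · simp only [Matrix.add_apply, Matrix.smul_apply, paleyProj_apply hF,
      vecMulVec_apply, Pi.one_apply, smul_eq_mul]
    field_simp
    grind
  · simp only [Matrix.add_apply, Matrix.smul_apply, paleyProj_apply hF, if_neg hij, if_neg hadj,
      vecMulVec_apply, Pi.one_apply, smul_eq_mul]
    field_simp
    grind

end Paley

theorem sum_xstar (F : Type) [Fintype F] :
    ∑ i : F, xstar F (Fintype.card F) i = √(Fintype.card F) := by
  simp only [xstar, Finset.sum_const, Finset.card_univ, nsmul_eq_mul, mul_one_div,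
    Real.div_sqrt]

theorem stmt9 (q : ℕ) (F : Type) [Field F] [Fintype F]
    (hcard : Fintype.card F = q) (hq : q % 4 = 1) :
    Theta1Feasible (Paley F) (xstar F q) (Xstar F q) ∧
    (∑ i : F, xstar F q i = Real.sqrt q) ∧
    (∀ (x : F → ℝ) (X : Matrix F F ℝ),
      Theta1Feasible (Paley F) x X → ∑ i, x i ≤ Real.sqrt q) := by
  subst hcard
  obtain ⟨Z, hZ, hZ_diag, hZ_nonadj⟩ := exists_theta1_dual_certificate hq
  have hs : 0 < √(Fintype.card F : ℝ) := Real.sqrt_pos.2 (by exact_mod_cast Fintype.card_pos)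
  exact ⟨theta1Feasible_xstar_Xstar hq, sum_xstar F,
    fun x X h => h.sum_le hs hZ hZ_diag hZ_nonadj⟩
end

section
/- Let G = (V,E) be a graph, I ⊆ V nonempty, (x,X) a feasible solution of the SDP max{1ᵀx : [[X,x],[xᵀ,1]] ⪰ 0, diag(X) = x, X_{ij} = 0 ∀{i,j} ∈ E}, and let i ∈ I satisfy either (a) X_{ij} = 0 for all j ∈ I, or (b) X_{ii} = 1 and X_{ij} = X_{jj} for all j ∈ I\{i}. Then X_I ∈ STAB²(G_I) if and only if X_{I\{i}} ∈ STAB²(G_{I\{i}}). -/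
open scoped Classical

/-- The squared stable set polytope STAB²(H): the convex hull of the outer
products ssᵀ of incidence vectors s of stable sets of H. -/
def stab2 {W : Type} (H : SimpleGraph W) : Set (Matrix W W ℝ) :=
  convexHull ℝ {M | ∃ s : W → ℝ, (∀ i, s i = 0 ∨ s i = 1) ∧
    (∀ i j, H.Adj i j → s i * s j = 0) ∧ M = Matrix.vecMulVec s s}

/-!
Realise STAB²(G_I) as the restriction to `I × I` of the convex hull of the outer products `ssᵀ`
of 0/1 vectors `s` on all of `V` that are stable inside `I`. Shrinking `I` only enlarges this set
of generators, which gives the forward direction.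

Conversely, put `c = X_ii ∈ {0, 1}`; in both cases `X_ij = c X_jj` for `j ∈ I \ {i}`. The affine
map replacing row and column `i` by `c` times the diagonal, and the entry `(i, i)` by `c`, sends
`ssᵀ` to `s's'ᵀ` with `s' = s` updated to `c` at `i` (as `s_j² = s_j`), and sends a lift of
`X_{I\{i}}` to one of `X_I`. The diagonal entries `c X_jj = X_ij` vanish on the neighbours `j` of
`i`, so every stable set with positive weight in a decomposition of `X_{I\{i}}` has `c s_j = 0`
there (it lies in a face), and then `s'` is again stable.
-/

theorem mem_convexHull_sep_of_map_eq_zero {𝕜 E κ : Type*} [Field 𝕜] [LinearOrder 𝕜]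
    [IsStrictOrderedRing 𝕜] [AddCommGroup E] [Module 𝕜 E] {s : Set E} {x : E}
    (φ : κ → E →ₗ[𝕜] 𝕜) (hx : x ∈ convexHull 𝕜 s) (hs : ∀ y ∈ s, ∀ k, 0 ≤ φ k y)
    (hφx : ∀ k, φ k x = 0) :
    x ∈ convexHull 𝕜 {y ∈ s | ∀ k, φ k y = 0} := by
  obtain ⟨ι, _, w, z, hw₀, hw₁, hz, rfl⟩ := mem_convexHull_iff_exists_fintype.mp hx
  have hvanish (j : ι) (hj : w j ≠ 0) (k : κ) : φ k (z j) = 0 := by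
    have hsum : ∑ j, w j * φ k (z j) = 0 := by simpa using hφx k
    have := (Finset.sum_eq_zero_iff_of_nonneg fun j _ => mul_nonneg (hw₀ j) (hs _ (hz j) k)).mp
      hsum j (Finset.mem_univ j)
    exact (mul_eq_zero.mp this).resolve_left hj
  let t := Finset.univ.filter fun j => w j ≠ 0
  have ht₁ : ∑ j ∈ t, w j = 1 := by rw [Finset.sum_filter_ne_zero, hw₁]
  have hcenter : t.centerMass w z = ∑ j, w j • z j := by
    rw [Finset.centerMass_eq_of_sum_1 _ _ ht₁]
    exact Finset.sum_filter_of_ne fun j _ hj => fun h => hj (by simp [h])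
  rw [← hcenter]
  refine t.centerMass_mem_convexHull (fun j _ => hw₀ j) (by rw [ht₁]; exact one_pos) ?_
  intro j hj
  exact ⟨hz j, hvanish j (Finset.mem_filter.mp hj).2⟩

open Matrix

section

variable {V : Type}

def stableOuterProducts (G : SimpleGraph V) (I : Set V) : Set (Matrix V V ℝ) :=
  {M | ∃ s : V → ℝ, (∀ a, s a = 0 ∨ s a = 1) ∧
    (∀ a ∈ I, ∀ b ∈ I, G.Adj a b → s a * s b = 0) ∧ M = vecMulVec s s}

theorem stableOuterProducts_anti (G : SimpleGraph V) {I J : Set V} (h : J ⊆ I) :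
    stableOuterProducts G I ⊆ stableOuterProducts G J := by
  rintro _ ⟨s, h01, hst, rfl⟩
  exact ⟨s, h01, fun a ha b hb => hst a (h ha) b (h hb), rfl⟩

theorem stab2_eq_convexHull_stableOuterProducts (G : SimpleGraph V) :
    stab2 G = convexHull ℝ (stableOuterProducts G Set.univ) := by
  simp [stab2, stableOuterProducts]

theorem image_submatrix_stableOuterProducts (G : SimpleGraph V) (I : Set V) :
    (fun M : Matrix V V ℝ => M.submatrix ((↑) : I → V) ((↑) : I → V)) '' stableOuterProducts G I =
      stableOuterProducts (G.induce I) Set.univ := by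
  ext M
  constructor
  · rintro ⟨_, ⟨s, h01, hst, rfl⟩, rfl⟩
    exact ⟨s ∘ (↑), fun a => h01 a, fun a _ b _ hab => hst a a.2 b b.2 hab, rfl⟩
  · rintro ⟨t, h01, hst, rfl⟩
    refine ⟨vecMulVec (fun v => if h : v ∈ I then t ⟨v, h⟩ else 0)
        (fun v => if h : v ∈ I then t ⟨v, h⟩ else 0), ⟨_, fun v => ?_, ?_, rfl⟩, ?_⟩
    · split_ifs
      · exact h01 _
      · exact Or.inl rfl
    · intro a ha b hb hab
      simpa [ha, hb] using hst ⟨a, ha⟩ trivial ⟨b, hb⟩ trivial hab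
    · ext a b
      simp [vecMulVec_apply]

theorem submatrix_mem_stab2_induce_iff {G : SimpleGraph V} {I : Set V} {X : Matrix V V ℝ} :
    X.submatrix ((↑) : I → V) ((↑) : I → V) ∈ stab2 (G.induce I) ↔
      ∃ Y ∈ convexHull ℝ (stableOuterProducts G I), ∀ a ∈ I, ∀ b ∈ I, Y a b = X a b := by
  have hlin : IsLinearMap ℝ fun M : Matrix V V ℝ => M.submatrix ((↑) : I → V) ((↑) : I → V) :=
    ⟨fun _ _ => rfl, fun _ _ => rfl⟩
  rw [stab2_eq_convexHull_stableOuterProducts, ← image_submatrix_stableOuterProducts,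
    ← hlin.image_convexHull]
  constructor
  · rintro ⟨Y, hY, hYX⟩
    exact ⟨Y, hY, fun a ha b hb => congrFun₂ hYX ⟨a, ha⟩ ⟨b, hb⟩⟩
  · rintro ⟨Y, hY, hYX⟩
    exact ⟨Y, hY, by ext a b; exact hYX a a.2 b b.2⟩

theorem submatrix_mem_stab2_induce_of_subset {G : SimpleGraph V} {I J : Set V}
    {X : Matrix V V ℝ} (hJI : J ⊆ I)
    (hX : X.submatrix ((↑) : I → V) ((↑) : I → V) ∈ stab2 (G.induce I)) :
    X.submatrix ((↑) : J → V) ((↑) : J → V) ∈ stab2 (G.induce J) := by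
  obtain ⟨Y, hY, hYX⟩ := submatrix_mem_stab2_induce_iff.mp hX
  exact submatrix_mem_stab2_induce_iff.mpr
    ⟨Y, convexHull_mono (stableOuterProducts_anti G hJI) hY,
      fun a ha b hb => hYX a (hJI ha) b (hJI hb)⟩

noncomputable def borderByDiagLinear (i : V) (c : ℝ) : Matrix V V ℝ →ₗ[ℝ] Matrix V V ℝ where
  toFun M := of fun a b =>
    if a = i then (if b = i then 0 else c * M b b) else if b = i then c * M a a else M a b
  map_add' M N := by
    ext a b
    simp only [Matrix.add_apply, of_apply]
    split_ifs <;> ring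
  map_smul' r M := by
    ext a b
    simp only [Matrix.smul_apply, of_apply, smul_eq_mul, RingHom.id_apply]
    split_ifs <;> ring

noncomputable def borderByDiag (i : V) (c : ℝ) : Matrix V V ℝ →ᵃ[ℝ] Matrix V V ℝ :=
  (borderByDiagLinear i c).toAffineMap + AffineMap.const ℝ _ (single i i c)

theorem borderByDiag_apply (i : V) (c : ℝ) (M : Matrix V V ℝ) (a b : V) :
    borderByDiag i c M a b =
      if a = i then (if b = i then c else c * M b b) else if b = i then c * M a a else M a b := by
  simp only [borderByDiag, borderByDiagLinear, AffineMap.coe_add, Pi.add_apply,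
    LinearMap.coe_toAffineMap, LinearMap.coe_mk, AddHom.coe_mk, AffineMap.const_apply,
    Matrix.add_apply, of_apply, single_apply]
  by_cases ha : a = i <;> by_cases hb : b = i <;> simp [ha, hb, Ne.symm]

theorem borderByDiag_mem_stableOuterProducts {G : SimpleGraph V} {I : Set V} {i : V} {c : ℝ}
    (hc : c = 0 ∨ c = 1) {M : Matrix V V ℝ} (hM : M ∈ stableOuterProducts G (I \ {i}))
    (hface : ∀ j ∈ I \ {i}, G.Adj i j → c * M j j = 0) :
    borderByDiag i c M ∈ stableOuterProducts G I := by
  obtain ⟨s, h01, hst, rfl⟩ := hM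
  have hidem (a : V) : s a * s a = s a := by rcases h01 a with h | h <;> simp [h]
  have hcc : c * c = c := by rcases hc with rfl | rfl <;> simp
  have hnbr (j : V) (hj : j ∈ I \ {i}) (hij : G.Adj i j) : c * s j = 0 := by
    simpa [vecMulVec_apply, hidem] using hface j hj hij
  refine ⟨Function.update s i c, fun a => ?_, fun a ha b hb hab => ?_, ?_⟩
  · rcases eq_or_ne a i with rfl | hai
    · simpa using hc
    · simpa [hai] using h01 a
  · rcases eq_or_ne a i with rfl | hai
    · have hba : b ≠ a := G.ne_of_adj hab |>.symm
      simpa [hba] using hnbr b ⟨hb, hba⟩ hab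
    rcases eq_or_ne b i with rfl | hbi
    · simpa [hai, mul_comm] using hnbr a ⟨ha, hai⟩ hab.symm
    simpa [hai, hbi] using hst a ⟨ha, hai⟩ b ⟨hb, hbi⟩ hab
  · ext a b
    rw [borderByDiag_apply]
    by_cases ha : a = i <;> by_cases hb : b = i <;>
      simp [ha, hb, vecMulVec_apply, hidem, hcc, mul_comm]

theorem submatrix_mem_stab2_induce_of_diff_singleton {G : SimpleGraph V} {I : Set V}
    {X : Matrix V V ℝ} {i : V} {c : ℝ} (hc : c = 0 ∨ c = 1) (hX : X.IsSymm)
    (hii : X i i = c) (hrow : ∀ j ∈ I, j ≠ i → X i j = c * X j j)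
    (hedge : ∀ j, G.Adj i j → X i j = 0)
    (hdiff : X.submatrix ((↑) : ↥(I \ {i}) → V) ((↑) : ↥(I \ {i}) → V) ∈
      stab2 (G.induce (I \ {i}))) :
    X.submatrix ((↑) : I → V) ((↑) : I → V) ∈ stab2 (G.induce I) := by
  obtain ⟨Y, hY, hYX⟩ := submatrix_mem_stab2_induce_iff.mp hdiff
  have hface : Y ∈ convexHull ℝ {M ∈ stableOuterProducts G (I \ {i}) |
      ∀ j : {j // j ∈ I \ {i} ∧ G.Adj i j}, c • entryLinearMap ℝ ℝ j.1 j.1 M = 0} := by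
    refine mem_convexHull_sep_of_map_eq_zero
      (fun j : {j // j ∈ I \ {i} ∧ G.Adj i j} => c • entryLinearMap ℝ ℝ j.1 j.1) hY ?_
      fun ⟨j, hj, hij⟩ => ?_
    · rintro _ ⟨s, -, -, rfl⟩ j
      have hc₀ : 0 ≤ c := by rcases hc with rfl | rfl <;> norm_num
      simpa [vecMulVec_apply] using mul_nonneg hc₀ (mul_self_nonneg (s j.1))
    · simp [hYX j hj j hj, ← hrow j hj.1 hj.2, hedge j hij]
  refine submatrix_mem_stab2_induce_iff.mpr ⟨borderByDiag i c Y, ?_, fun a ha b hb => ?_⟩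
  · have hmem := (borderByDiag i c).image_convexHull _ ▸ Set.mem_image_of_mem _ hface
    refine convexHull_mono ?_ hmem
    rintro _ ⟨M, ⟨hM, hMface⟩, rfl⟩
    exact borderByDiag_mem_stableOuterProducts hc hM fun j hj hij => by
      simpa using hMface ⟨j, hj, hij⟩
  · rw [borderByDiag_apply]
    by_cases hai : a = i <;> by_cases hbi : b = i
    · simp [hai, hbi, hii]
    · simp [hai, hbi, hYX b ⟨hb, hbi⟩ b ⟨hb, hbi⟩, hrow b hb hbi]
    · simp [hai, hbi, hYX a ⟨ha, hai⟩ a ⟨ha, hai⟩, ← hrow a ha hai, hX.apply]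
    · simp [hai, hbi, hYX a ⟨ha, hai⟩ b ⟨hb, hbi⟩]

end

theorem stmt14_general {V : Type} [Fintype V] (G : SimpleGraph V)
    (x : V → ℝ) (X : Matrix V V ℝ) (hfeas : Theta1Feasible G x X)
    (I : Set V) (i : V) (hi : i ∈ I)
    (hcase : (∀ j ∈ I, X i j = 0) ∨
      (X i i = 1 ∧ ∀ j ∈ I, j ≠ i → X i j = X j j)) :
    (X.submatrix (fun a : I => (a : V)) (fun a : I => (a : V)) ∈
        stab2 (G.induce I) ↔
      X.submatrix (fun a : (I \ {i} : Set V) => (a : V))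
          (fun a : (I \ {i} : Set V) => (a : V)) ∈
        stab2 (G.induce (I \ {i}))) := by
  obtain ⟨hpsd, -, hedge⟩ := hfeas
  have hX : X.IsSymm := isHermitian_iff_isSymm.mp (isHermitian_fromBlocks_iff.mp hpsd.1).1
  refine ⟨submatrix_mem_stab2_induce_of_subset Set.sdiff_subset, fun hdiff => ?_⟩
  rcases hcase with hzero | ⟨hii, hrow⟩
  · exact submatrix_mem_stab2_induce_of_diff_singleton (c := 0) (Or.inl rfl) hX (hzero i hi)
      (fun j hj _ => by simp [hzero j hj]) (hedge i) hdiff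
  · exact submatrix_mem_stab2_induce_of_diff_singleton (c := 1) (Or.inr rfl) hX hii
      (fun j hj hji => by simp [hrow j hj hji]) (hedge i) hdiff

theorem stmt14 {V : Type} [Fintype V] (G : SimpleGraph V)
    (x : V → ℝ) (X : Matrix V V ℝ) (hfeas : Theta1Feasible G x X)
    (I : Set V) (hIne : I.Nonempty) (i : V) (hi : i ∈ I)
    (hcase : (∀ j ∈ I, X i j = 0) ∨
      (X i i = 1 ∧ ∀ j ∈ I, j ≠ i → X i j = X j j)) :
    (X.submatrix (fun a : I => (a : V)) (fun a : I => (a : V)) ∈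
        stab2 (G.induce I) ↔
      X.submatrix (fun a : (I \ {i} : Set V) => (a : V))
          (fun a : (I \ {i} : Set V) => (a : V)) ∈
        stab2 (G.induce (I \ {i}))) :=
  stmt14_general G x X hfeas I i hi hcase
end
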